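/- Let Q be an n×n real symmetric positive definite matrix with spectral condition number k_Q, let r ∈ ℝⁿ, and let ε be a real number with 0 < ε < ‖r‖₂ k_Q / ‖Q‖₂. If A is a diagonal n×n matrix with positive diagonal entries whose largest entry satisfies α_max < ε ‖Q‖₂² / (‖r‖₂ k_Q² − ε ‖Q‖₂ k_Q), then the regularization error satisfies ‖Q⁻¹r − (Q + A)⁻¹ r‖₂ < ε. -/

import Mathlib

open Matrix Filter Topology

variable {n : ℕ}

/-- Largest eigenvalue of a Hermitian real matrix. -/
noncomputable def maxEig {M : Matrix (Fin n) (Fin n) ℝ} (hM : M.IsHermitian) : ℝ :=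
  ⨆ i, hM.eigenvalues i

/-- Smallest eigenvalue of a Hermitian real matrix. -/
noncomputable def minEig {M : Matrix (Fin n) (Fin n) ℝ} (hM : M.IsHermitian) : ℝ :=
  ⨅ i, hM.eigenvalues i

/-- Spectral norm (ℓ² operator norm) of a real matrix. -/
noncomputable def spec (M : Matrix (Fin n) (Fin n) ℝ) : ℝ :=
  ‖LinearMap.toContinuousLinearMap (Matrix.toEuclideanLin M)‖

/-- Euclidean norm of a vector. -/
noncomputable def enorm2 (v : Fin n → ℝ) : ℝ :=
  Real.sqrt (∑ i, v i ^ 2)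

lemma dot_symm {S : Matrix (Fin n) (Fin n) ℝ} (hS : S.IsHermitian) (x y : Fin n → ℝ) :
    x ⬝ᵥ (S *ᵥ y) = (S *ᵥ x) ⬝ᵥ y := by
  have hT : Sᵀ = S := by rw [← conjTranspose_eq_transpose_of_trivial]; exact hS
  rw [dotProduct_mulVec, ← mulVec_transpose, hT]

noncomputable def ev (v : Fin n → ℝ) : EuclideanSpace ℝ (Fin n) :=
  (WithLp.equiv 2 (Fin n → ℝ)).symm v

lemma inner_ev (x y : Fin n → ℝ) : (inner ℝ (ev x) (ev y) : ℝ) = x ⬝ᵥ y := by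
  simp [ev, PiLp.inner_apply, dotProduct, mul_comm]

lemma repr_ev (B : OrthonormalBasis (Fin n) ℝ (EuclideanSpace ℝ (Fin n))) (v : Fin n → ℝ)
    (i : Fin n) : B.repr (ev v) i = (WithLp.equiv 2 (Fin n → ℝ)) (B i) ⬝ᵥ v := by
  rw [B.repr_apply_apply]
  exact inner_ev _ _

lemma repr_mulVec (B : OrthonormalBasis (Fin n) ℝ (EuclideanSpace ℝ (Fin n)))
    {S : Matrix (Fin n) (Fin n) ℝ} (hS : S.IsHermitian) {s : Fin n → ℝ}
    (h : ∀ i, S *ᵥ (WithLp.equiv 2 (Fin n → ℝ)) (B i) = s i • (WithLp.equiv 2 (Fin n → ℝ)) (B i))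
    (v : Fin n → ℝ) (i : Fin n) :
    B.repr (ev (S *ᵥ v)) i = s i * B.repr (ev v) i := by
  rw [repr_ev, repr_ev, dot_symm hS, h i, smul_dotProduct, smul_eq_mul]

lemma dot_sum_formula (B : OrthonormalBasis (Fin n) ℝ (EuclideanSpace ℝ (Fin n)))
    (x y : Fin n → ℝ) : x ⬝ᵥ y = ∑ i, B.repr (ev x) i * B.repr (ev y) i := by
  rw [← inner_ev x y, ← B.repr.inner_map_map (ev x) (ev y)]
  simp only [PiLp.inner_apply, RCLike.inner_apply, starRingEnd_apply, star_trivial]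
  exact Finset.sum_congr rfl fun i _ => mul_comm _ _

lemma dot_mulVec_eq_sum (B : OrthonormalBasis (Fin n) ℝ (EuclideanSpace ℝ (Fin n)))
    {S : Matrix (Fin n) (Fin n) ℝ} (hS : S.IsHermitian) {s : Fin n → ℝ}
    (h : ∀ i, S *ᵥ (WithLp.equiv 2 (Fin n → ℝ)) (B i) = s i • (WithLp.equiv 2 (Fin n → ℝ)) (B i))
    (v : Fin n → ℝ) :
    v ⬝ᵥ (S *ᵥ v) = ∑ i, s i * (B.repr (ev v) i)^2 := by
  rw [dot_sum_formula B]
  refine Finset.sum_congr rfl fun i _ => ?_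
  rw [repr_mulVec B hS h]
  ring

lemma dot_self_eq_sum (B : OrthonormalBasis (Fin n) ℝ (EuclideanSpace ℝ (Fin n)))
    (v : Fin n → ℝ) : v ⬝ᵥ v = ∑ i, (B.repr (ev v) i)^2 := by
  rw [dot_sum_formula B]
  refine Finset.sum_congr rfl fun i _ => ?_
  ring

lemma mulVec_inv_cancel {P : Matrix (Fin n) (Fin n) ℝ} (hP : P.PosDef) (v : Fin n → ℝ) :
    P *ᵥ (P⁻¹ *ᵥ v) = v := by
  rw [mulVec_mulVec, Matrix.mul_nonsing_inv _ (isUnit_iff_isUnit_det _ |>.1 hP.isUnit), one_mulVec]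

lemma dot_nonneg {P : Matrix (Fin n) (Fin n) ℝ} (hP : P.PosSemidef) (x : Fin n → ℝ) :
    0 ≤ x ⬝ᵥ (P *ᵥ x) := by simpa using hP.dotProduct_mulVec_nonneg x

lemma variational {P : Matrix (Fin n) (Fin n) ℝ} (hP : P.PosDef) (v x : Fin n → ℝ) :
    2 * (v ⬝ᵥ x) - x ⬝ᵥ (P *ᵥ x) ≤ v ⬝ᵥ (P⁻¹ *ᵥ v) := by
  have h0 := dot_nonneg hP.posSemidef (x - P⁻¹ *ᵥ v)
  rw [mulVec_sub, sub_dotProduct, dotProduct_sub, dotProduct_sub,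
    mulVec_inv_cancel hP] at h0
  have h1 : (P⁻¹ *ᵥ v) ⬝ᵥ (P *ᵥ x) = v ⬝ᵥ x := by
    rw [dot_symm hP.1, mulVec_inv_cancel hP]
  have h2 : (P⁻¹ *ᵥ v) ⬝ᵥ v = v ⬝ᵥ (P⁻¹ *ᵥ v) := dotProduct_comm _ _
  have h3 : x ⬝ᵥ v = v ⬝ᵥ x := dotProduct_comm _ _
  linarith

lemma inv_dot_mono {P N : Matrix (Fin n) (Fin n) ℝ} (hP : P.PosDef) (hN : N.PosDef)
    (h : ∀ v, v ⬝ᵥ (P *ᵥ v) ≤ v ⬝ᵥ (N *ᵥ v)) (v : Fin n → ℝ) :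
    v ⬝ᵥ (N⁻¹ *ᵥ v) ≤ v ⬝ᵥ (P⁻¹ *ᵥ v) := by
  have h1 := variational hP v (N⁻¹ *ᵥ v)
  have h2 : v ⬝ᵥ (N⁻¹ *ᵥ v) = 2 * (v ⬝ᵥ (N⁻¹ *ᵥ v)) - (N⁻¹ *ᵥ v) ⬝ᵥ (N *ᵥ (N⁻¹ *ᵥ v)) := by
    rw [mulVec_inv_cancel hN, dotProduct_comm]; ring
  have h3 := h (N⁻¹ *ᵥ v)
  linarith

lemma ev_coe (B : OrthonormalBasis (Fin n) ℝ (EuclideanSpace ℝ (Fin n))) (i : Fin n) :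
    ev ((WithLp.equiv 2 (Fin n → ℝ)) (B i)) = B i := rfl

lemma basis_dot_self (B : OrthonormalBasis (Fin n) ℝ (EuclideanSpace ℝ (Fin n))) (i : Fin n) :
    (WithLp.equiv 2 (Fin n → ℝ)) (B i) ⬝ᵥ (WithLp.equiv 2 (Fin n → ℝ)) (B i) = 1 := by
  rw [← inner_ev, ev_coe]
  rw [real_inner_self_eq_norm_sq, B.orthonormal.1 i]
  norm_num

lemma eigenvalue_rayleigh {S : Matrix (Fin n) (Fin n) ℝ} (hS : S.IsHermitian) (i : Fin n) :
    (WithLp.equiv 2 (Fin n → ℝ)) (hS.eigenvectorBasis i) ⬝ᵥ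
      (S *ᵥ (WithLp.equiv 2 (Fin n → ℝ)) (hS.eigenvectorBasis i)) = hS.eigenvalues i := by
  rw [show S *ᵥ (WithLp.equiv 2 (Fin n → ℝ)) (hS.eigenvectorBasis i)
      = hS.eigenvalues i • (WithLp.equiv 2 (Fin n → ℝ)) (hS.eigenvectorBasis i) from
      hS.mulVec_eigenvectorBasis i,
    dotProduct_smul, smul_eq_mul, basis_dot_self, mul_one]

lemma rayleigh_norm_le {S : Matrix (Fin n) (Fin n) ℝ} (hS : S.IsHermitian) {c : ℝ}
    (h0 : ∀ v, 0 ≤ v ⬝ᵥ (S *ᵥ v)) (h1 : ∀ v, v ⬝ᵥ (S *ᵥ v) ≤ c * (v ⬝ᵥ v)) (r : Fin n → ℝ) :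
    (S *ᵥ r) ⬝ᵥ (S *ᵥ r) ≤ c^2 * (r ⬝ᵥ r) := by
  set B := hS.eigenvectorBasis
  set s := hS.eigenvalues
  have heig : ∀ i, S *ᵥ (WithLp.equiv 2 (Fin n → ℝ)) (B i)
      = s i • (WithLp.equiv 2 (Fin n → ℝ)) (B i) := hS.mulVec_eigenvectorBasis
  have hsnn : ∀ i, 0 ≤ s i := by
    intro i
    have := h0 ((WithLp.equiv 2 (Fin n → ℝ)) (B i))
    rwa [eigenvalue_rayleigh hS i] at this
  have hsc : ∀ i, s i ≤ c := by
    intro i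
    have := h1 ((WithLp.equiv 2 (Fin n → ℝ)) (B i))
    rwa [eigenvalue_rayleigh hS i, basis_dot_self, mul_one] at this
  have hSS : (S * S).IsHermitian := by
    rw [Matrix.IsHermitian, conjTranspose_mul, hS.eq]
  have heig2 : ∀ i, (S * S) *ᵥ (WithLp.equiv 2 (Fin n → ℝ)) (B i)
      = ((s i)^2) • (WithLp.equiv 2 (Fin n → ℝ)) (B i) := by
    intro i
    rw [← mulVec_mulVec, heig i, mulVec_smul, heig i, smul_smul, ← sq]
  have key : (S *ᵥ r) ⬝ᵥ (S *ᵥ r) = ∑ i, (s i)^2 * (B.repr (ev r) i)^2 := by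
    rw [dot_symm hS, mulVec_mulVec, dotProduct_comm, dot_mulVec_eq_sum B hSS heig2]
  rw [key, dot_self_eq_sum B r, Finset.mul_sum]
  refine Finset.sum_le_sum fun i _ => ?_
  have h4 : (0:ℝ) ≤ (B.repr (ev r) i)^2 := sq_nonneg _
  have h5 : (s i)^2 ≤ c^2 := sq_le_sq' (by linarith [hsnn i, hsc i]) (hsc i)
  nlinarith

lemma inv_mulVec_eig {P : Matrix (Fin n) (Fin n) ℝ} (hP : P.PosDef) {u : Fin n → ℝ} {lam : ℝ}
    (hlam : lam ≠ 0) (h : P *ᵥ u = lam • u) : P⁻¹ *ᵥ u = lam⁻¹ • u := by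
  have hcan : P⁻¹ *ᵥ (P *ᵥ u) = u := by
    rw [mulVec_mulVec, Matrix.nonsing_inv_mul _ (isUnit_iff_isUnit_det _ |>.1 hP.isUnit),
      one_mulVec]
  rw [h, mulVec_smul] at hcan
  have h2 := congrArg (fun w => lam⁻¹ • w) hcan
  have h3 : lam⁻¹ • u = P⁻¹ *ᵥ u := by
    simpa [smul_smul, inv_mul_cancel₀ hlam] using h2.symm
  exact h3.symm

lemma shift_posDef {Q : Matrix (Fin n) (Fin n) ℝ} (hQ : Q.PosDef) {a : ℝ} (ha : 0 ≤ a) :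
    (Q + a • (1 : Matrix (Fin n) (Fin n) ℝ)).PosDef := by
  apply hQ.add_posSemidef
  rw [smul_one_eq_diagonal]
  exact Matrix.PosSemidef.diagonal fun i => ha

lemma minEig_le [NeZero n] {Q : Matrix (Fin n) (Fin n) ℝ} (hQ : Q.IsHermitian) (i : Fin n) :
    minEig hQ ≤ hQ.eigenvalues i :=
  ciInf_le (Set.Finite.bddBelow (Set.finite_range _)) i

lemma le_maxEig [NeZero n] {Q : Matrix (Fin n) (Fin n) ℝ} (hQ : Q.IsHermitian) (i : Fin n) :
    hQ.eigenvalues i ≤ maxEig hQ :=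
  le_ciSup (Set.Finite.bddAbove (Set.finite_range _)) i

lemma minEig_pos [NeZero n] {Q : Matrix (Fin n) (Fin n) ℝ} (hQ : Q.PosDef) :
    0 < minEig hQ.1 := by
  obtain ⟨i, hi⟩ := Finite.exists_min hQ.1.eigenvalues
  have : minEig hQ.1 = hQ.1.eigenvalues i :=
    le_antisymm (minEig_le hQ.1 i) (le_ciInf hi)
  rw [this]
  exact hQ.eigenvalues_pos i

lemma shift_diff_bound [NeZero n] {Q : Matrix (Fin n) (Fin n) ℝ} (hQ : Q.PosDef) {a : ℝ}
    (ha : 0 ≤ a) (v : Fin n → ℝ) :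
    v ⬝ᵥ (Q⁻¹ *ᵥ v) - v ⬝ᵥ ((Q + a • (1 : Matrix (Fin n) (Fin n) ℝ))⁻¹ *ᵥ v)
      ≤ (a / (minEig hQ.1 * (minEig hQ.1 + a))) * (v ⬝ᵥ v) := by
  set μ := minEig hQ.1 with hμdef
  set B := hQ.1.eigenvectorBasis with hBdef
  set lam := hQ.1.eigenvalues with hlamdef
  have hμ : 0 < μ := minEig_pos hQ
  have hlam : ∀ i, 0 < lam i := hQ.eigenvalues_pos
  have hμle : ∀ i, μ ≤ lam i := minEig_le hQ.1
  have heig : ∀ i, Q *ᵥ (WithLp.equiv 2 (Fin n → ℝ)) (B i)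
      = lam i • (WithLp.equiv 2 (Fin n → ℝ)) (B i) := hQ.1.mulVec_eigenvectorBasis
  have hN : (Q + a • (1 : Matrix (Fin n) (Fin n) ℝ)).PosDef := shift_posDef hQ ha
  have heigN : ∀ i, (Q + a • (1 : Matrix (Fin n) (Fin n) ℝ)) *ᵥ (WithLp.equiv 2 (Fin n → ℝ)) (B i)
      = (lam i + a) • (WithLp.equiv 2 (Fin n → ℝ)) (B i) := by
    intro i
    rw [add_mulVec, heig i, smul_mulVec, one_mulVec, add_smul]
  have heigQi : ∀ i, Q⁻¹ *ᵥ (WithLp.equiv 2 (Fin n → ℝ)) (B i)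
      = (lam i)⁻¹ • (WithLp.equiv 2 (Fin n → ℝ)) (B i) :=
    fun i => inv_mulVec_eig hQ (hlam i).ne' (heig i)
  have heigNi : ∀ i, (Q + a • (1 : Matrix (Fin n) (Fin n) ℝ))⁻¹ *ᵥ (WithLp.equiv 2 (Fin n → ℝ)) (B i)
      = (lam i + a)⁻¹ • (WithLp.equiv 2 (Fin n → ℝ)) (B i) :=
    fun i => inv_mulVec_eig hN (by linarith [hlam i] : (0:ℝ) < lam i + a).ne' (heigN i)
  rw [dot_mulVec_eq_sum B hQ.1.inv heigQi v, dot_mulVec_eq_sum B hN.1.inv heigNi v,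
    dot_self_eq_sum B v, Finset.mul_sum, ← Finset.sum_sub_distrib]
  refine Finset.sum_le_sum fun i _ => ?_
  have ht : (0:ℝ) ≤ (B.repr (ev v) i)^2 := sq_nonneg _
  have hscal : (lam i)⁻¹ - (lam i + a)⁻¹ ≤ a / (μ * (μ + a)) := by
    have e1 : (lam i)⁻¹ - (lam i + a)⁻¹ = a / (lam i * (lam i + a)) := by
      have h1 : lam i ≠ 0 := (hlam i).ne'
      have h2 : lam i + a ≠ 0 := by linarith [hlam i]
      field_simp
      ring
    rw [e1]
    apply div_le_div_of_nonneg_left ha (mul_pos hμ (by linarith))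
    nlinarith [hμle i, hlam i]
  nlinarith [hscal, ht]

lemma norm_sq_eq_dot (x : EuclideanSpace ℝ (Fin n)) :
    ‖x‖^2 = (WithLp.equiv 2 (Fin n → ℝ)) x ⬝ᵥ (WithLp.equiv 2 (Fin n → ℝ)) x := by
  rw [← real_inner_self_eq_norm_sq, ← inner_ev]
  rfl

lemma dot_mulVec_le_max [NeZero n] {Q : Matrix (Fin n) (Fin n) ℝ} (hQ : Q.PosDef)
    (v : Fin n → ℝ) : v ⬝ᵥ (Q *ᵥ v) ≤ maxEig hQ.1 * (v ⬝ᵥ v) := by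
  rw [dot_mulVec_eq_sum hQ.1.eigenvectorBasis hQ.1 hQ.1.mulVec_eigenvectorBasis v,
    dot_self_eq_sum hQ.1.eigenvectorBasis v, Finset.mul_sum]
  exact Finset.sum_le_sum fun i _ =>
    mul_le_mul_of_nonneg_right (le_maxEig hQ.1 i) (sq_nonneg _)

lemma spec_eq_maxEig [NeZero n] {Q : Matrix (Fin n) (Fin n) ℝ} (hQ : Q.PosDef) :
    spec Q = maxEig hQ.1 := by
  obtain ⟨i0, hi0⟩ := Finite.exists_max hQ.1.eigenvalues
  have hmx : maxEig hQ.1 = hQ.1.eigenvalues i0 :=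
    le_antisymm (ciSup_le hi0) (le_maxEig hQ.1 i0)
  have hmxpos : 0 < maxEig hQ.1 := hmx ▸ hQ.eigenvalues_pos i0
  set T := LinearMap.toContinuousLinearMap (Matrix.toEuclideanLin Q) with hT
  have hTapp : ∀ x : EuclideanSpace ℝ (Fin n),
      (WithLp.equiv 2 (Fin n → ℝ)) (T x) = Q *ᵥ (WithLp.equiv 2 (Fin n → ℝ)) x := by
    intro x; rfl
  apply le_antisymm
  · apply ContinuousLinearMap.opNorm_le_bound _ hmxpos.le
    intro x
    have h1 : ‖T x‖^2 ≤ (maxEig hQ.1)^2 * ‖x‖^2 := by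
      rw [norm_sq_eq_dot, norm_sq_eq_dot, hTapp x]
      exact rayleigh_norm_le hQ.1 (fun v => dot_nonneg hQ.posSemidef v)
        (fun v => dot_mulVec_le_max hQ v) _
    have h2 : (0:ℝ) ≤ maxEig hQ.1 * ‖x‖ := by positivity
    nlinarith [norm_nonneg (T x)]
  · have hu : ‖hQ.1.eigenvectorBasis i0‖ = 1 := hQ.1.eigenvectorBasis.orthonormal.1 i0
    have hTu : T (hQ.1.eigenvectorBasis i0) = hQ.1.eigenvalues i0 • hQ.1.eigenvectorBasis i0 := by
      apply (WithLp.equiv 2 (Fin n → ℝ)).injective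
      rw [hTapp]
      exact hQ.1.mulVec_eigenvectorBasis i0
    have := T.le_opNorm (hQ.1.eigenvectorBasis i0)
    rw [hTu, norm_smul, hu, mul_one, mul_one, Real.norm_eq_abs,
      abs_of_pos (hQ.eigenvalues_pos i0)] at this
    rw [hmx]
    exact this

lemma enorm2_eq_dot (v : Fin n → ℝ) : enorm2 v = Real.sqrt (v ⬝ᵥ v) := by
  unfold enorm2 dotProduct
  congr 1
  exact Finset.sum_congr rfl fun i _ => sq (v i)

theorem stmt14 [NeZero n] (Q A : Matrix (Fin n) (Fin n) ℝ) (hQ : Q.PosDef)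
    (r : Fin n → ℝ) (kQ : ℝ) (hkQ : kQ = maxEig hQ.1 / minEig hQ.1)
    (ε : ℝ) (hε : 0 < ε) (hε2 : ε < enorm2 r * kQ / spec Q)
    (α : Fin n → ℝ) (hA : A = Matrix.diagonal α) (hαpos : ∀ i, 0 < α i)
    (hαmax : (⨆ i, α i) < ε * spec Q ^ 2 / (enorm2 r * kQ ^ 2 - ε * spec Q * kQ)) :
    enorm2 (Q⁻¹ *ᵥ r - (Q + A)⁻¹ *ᵥ r) < ε := by
  -- notation
  set μ := minEig hQ.1 with hμdef
  set m := maxEig hQ.1 with hmdef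
  set R := enorm2 r with hRdef
  set a := ⨆ i, α i with hadef
  obtain ⟨i1, hi1⟩ := Finite.exists_max α
  have haeq : a = α i1 := le_antisymm (ciSup_le hi1) (le_ciSup (Set.Finite.bddAbove (Set.finite_range _)) i1)
  have hapos : 0 < a := haeq ▸ hαpos i1
  have hαle : ∀ i, α i ≤ a := fun i => le_ciSup (Set.Finite.bddAbove (Set.finite_range _)) i
  have hμ : 0 < μ := minEig_pos hQ
  obtain ⟨i0, hi0⟩ := Finite.exists_max hQ.1.eigenvalues
  have hm : 0 < m := by
    have : m = hQ.1.eigenvalues i0 := le_antisymm (ciSup_le hi0) (le_maxEig hQ.1 i0)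
    rw [this]; exact hQ.eigenvalues_pos i0
  rw [spec_eq_maxEig hQ, ← hmdef, hkQ] at hε2 hαmax
  -- positive definiteness of pieces
  have hApsd : A.PosSemidef := by
    rw [hA]; exact Matrix.PosSemidef.diagonal fun i => (hαpos i).le
  have hM : (Q + A).PosDef := hQ.add_posSemidef hApsd
  have hN : (Q + a • (1 : Matrix (Fin n) (Fin n) ℝ)).PosDef := shift_posDef hQ hapos.le
  -- quadratic form comparisons
  have h_leM : ∀ v, v ⬝ᵥ (Q *ᵥ v) ≤ v ⬝ᵥ ((Q + A) *ᵥ v) := by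
    intro v
    rw [add_mulVec, dotProduct_add]
    have := dot_nonneg hApsd v
    linarith
  have h_leN : ∀ v, v ⬝ᵥ ((Q + A) *ᵥ v) ≤ v ⬝ᵥ ((Q + a • (1 : Matrix (Fin n) (Fin n) ℝ)) *ᵥ v) := by
    intro v
    rw [add_mulVec, dotProduct_add, add_mulVec, dotProduct_add]
    have h1 : v ⬝ᵥ (A *ᵥ v) ≤ v ⬝ᵥ ((a • (1 : Matrix (Fin n) (Fin n) ℝ)) *ᵥ v) := by
      rw [hA, smul_mulVec, one_mulVec, dotProduct_smul, smul_eq_mul]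
      unfold dotProduct
      rw [Finset.mul_sum]
      refine Finset.sum_le_sum fun i _ => ?_
      rw [mulVec_diagonal]
      nlinarith [hαle i, sq_nonneg (v i)]
    linarith
  -- the error matrix
  set D := Q⁻¹ - (Q + A)⁻¹ with hDdef
  have hDherm : D.IsHermitian := hQ.1.inv.sub hM.1.inv
  have hDmul : ∀ v, D *ᵥ v = Q⁻¹ *ᵥ v - (Q + A)⁻¹ *ᵥ v := fun v => sub_mulVec _ _ _
  set c := a / (μ * (μ + a)) with hcdef
  have h0 : ∀ v, 0 ≤ v ⬝ᵥ (D *ᵥ v) := by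
    intro v
    rw [hDmul, dotProduct_sub, sub_nonneg]
    exact inv_dot_mono hQ hM h_leM v
  have h1 : ∀ v, v ⬝ᵥ (D *ᵥ v) ≤ c * (v ⬝ᵥ v) := by
    intro v
    rw [hDmul, dotProduct_sub]
    have h2 := inv_dot_mono hM hN h_leN v
    have h3 := shift_diff_bound hQ hapos.le v
    rw [← hμdef] at h3
    linarith
  have hray := rayleigh_norm_le hDherm h0 h1 r
  -- convert to enorm2
  have hnorm : enorm2 (Q⁻¹ *ᵥ r - (Q + A)⁻¹ *ᵥ r) ≤ c * R := by
    rw [← hDmul, enorm2_eq_dot, hRdef, enorm2_eq_dot]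
    have hc : 0 ≤ c := by positivity
    calc Real.sqrt ((D *ᵥ r) ⬝ᵥ (D *ᵥ r)) ≤ Real.sqrt (c^2 * (r ⬝ᵥ r)) :=
          Real.sqrt_le_sqrt hray
      _ = c * Real.sqrt (r ⬝ᵥ r) := by
          rw [Real.sqrt_mul (sq_nonneg c), Real.sqrt_sq hc]
  -- arithmetic endgame
  have hR0 : 0 ≤ R := Real.sqrt_nonneg _
  have hεμR : ε * μ < R := by
    have he : R * (m / μ) / m = R / μ := by field_simp
    rw [he] at hε2
    calc ε * μ < (R / μ) * μ := by exact mul_lt_mul_of_pos_right hε2 hμ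
      _ = R := by field_simp
  have hRpos : 0 < R := lt_of_le_of_lt (by positivity) hεμR
  have hdenpos : 0 < R * (m / μ) ^ 2 - ε * m * (m / μ) := by
    have : R * (m / μ) ^ 2 - ε * m * (m / μ) = (m^2 / μ^2) * (R - ε * μ) := by
      field_simp
    rw [this]
    have : 0 < R - ε * μ := by linarith
    positivity
  have h4 := (lt_div_iff₀ hdenpos).mp hαmax
  -- h4 : a * (R * (m/μ)^2 - ε * m * (m/μ)) < ε * m^2
  have key2 : a * (R - ε * μ) < ε * μ^2 := by
    have heq : (a * (R * (m / μ) ^ 2 - ε * m * (m / μ))) * μ^2 = (a * (R - ε * μ)) * m^2 := by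
      field_simp
    have h5 := mul_lt_mul_of_pos_right h4 (pow_pos hμ 2)
    rw [heq] at h5
    have h6 : (ε * m ^ 2) * μ ^ 2 = (ε * μ^2) * m^2 := by ring
    rw [h6] at h5
    exact lt_of_mul_lt_mul_right h5 (sq_nonneg m) |>.trans_le le_rfl
  have hcR : c * R < ε := by
    rw [hcdef, div_mul_eq_mul_div, div_lt_iff₀ (by positivity : 0 < μ * (μ + a))]
    nlinarith [key2, hεμR, hapos, hμ]
  linarith [hnorm, hcR]
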